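/- The three-term identity relating theta, Appell κ, and the Kronecker function f holds: e(y)·θ(y+z,τ)·κ(y, z−x; τ) − e(−x)·θ(x−z,τ)·κ(−x, y+z; τ) = θ(z,τ)·f(x,y;τ), as an identity of meromorphic functions in (x,y,z) ∈ ℂ³ (valid wherever all series converge, e.g. 0 < α(x) < 1, 0 < α(y) < 1). -/

import Mathlib

open Complex

noncomputable def e (w : ℂ) : ℂ := Complex.exp (2 * Real.pi * Complex.I * w)

noncomputable def theta (z τ : ℂ) : ℂ := ∑' n : ℤ, e (τ * n ^ 2 / 2 + n * z)

noncomputable def thetaD (z τ : ℂ) : ℂ := deriv (fun w => theta w τ) z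

noncomputable def al (τ z : ℂ) : ℝ := z.im / τ.im

noncomputable def sgn (t : ℝ) : ℂ := if 0 < t then 1 else -1

/-- term of the Kronecker-Eisenstein series, indexed by `(m, n) : ℤ × ℤ`. -/
noncomputable def fterm (τ z₁ z₂ : ℂ) (p : ℤ × ℤ) : ℂ :=
  if 0 < (al τ z₁ + p.1) * (al τ z₂ + p.2) then
    sgn (al τ z₁ + p.1) * e (τ * p.1 * p.2 + p.2 * z₁ + p.1 * z₂)
  else 0

noncomputable def fKr (z₁ z₂ τ : ℂ) : ℂ := ∑' p : ℤ × ℤ, fterm τ z₁ z₂ p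

noncomputable def kappa (y x τ : ℂ) : ℂ :=
  ∑' n : ℤ, e (τ * n ^ 2 / 2 + n * x) / (e (n * τ) - e y)

/-- term of the trapezoid series `g`, indexed by `(m, n) : ℤ × ℤ`. -/
noncomputable def gterm (τ z₁ z₂ : ℂ) (p : ℤ × ℤ) : ℂ :=
  if 0 < ((p.2 : ℝ) + al τ z₁) * ((p.1 : ℝ) + al τ z₂) then
    sgn ((p.1 : ℝ) + al τ z₂) *
      e (((p.2 : ℂ) + p.1 / 2) * p.1 * τ + p.1 * z₁ + ((p.1 : ℂ) + p.2) * z₂)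
  else 0

noncomputable def gF (z₁ z₂ τ : ℂ) : ℂ := ∑' p : ℤ × ℤ, gterm τ z₁ z₂ p

noncomputable def g0 (z₁ z₂ τ : ℂ) : ℂ :=
  ∑' m : ℤ, e (τ * m ^ 2 / 2 + m * (z₁ + z₂)) / (1 - e (m * τ + z₂))

/-- term of the series `h₀`, indexed by `(m, n) : ℤ × ℤ`. -/
noncomputable def hterm (τ x : ℂ) (p : ℤ × ℤ) : ℂ :=
  if 0 < ((p.1 : ℝ) + 1 / 2) * ((p.2 : ℝ) + 1 / 2) then
    sgn ((p.1 : ℝ) + 1 / 2) *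
      e (τ / 2 * (2 * p.1 ^ 2 + 4 * p.1 * p.2 + p.2 ^ 2) + p.2 * x)
  else 0

noncomputable def h0 (τ x : ℂ) : ℂ := ∑' p : ℤ × ℤ, hterm τ x p

def notInt (t : ℝ) : Prop := ∀ k : ℤ, t ≠ (k : ℝ)

/-! ### Helper lemmas -/

lemma e_add (a b : ℂ) : e (a + b) = e a * e b := by
  simp [e, mul_add, Complex.exp_add]

lemma e_ne_zero (a : ℂ) : e a ≠ 0 := Complex.exp_ne_zero _

lemma e_neg (a : ℂ) : e (-a) = (e a)⁻¹ := by
  rw [e]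
  rw [show 2 * (Real.pi:ℂ) * Complex.I * -a = -(2 * Real.pi * Complex.I * a) by ring,
    Complex.exp_neg]
  rfl

lemma e_nat_mul (k : ℕ) (a : ℂ) : e (k * a) = e a ^ k := by
  simp [e, ← Complex.exp_nat_mul]; ring_nf

lemma norm_e (w : ℂ) : ‖e w‖ = Real.exp (-(2 * Real.pi) * w.im) := by
  rw [e, Complex.norm_exp]
  congr 1
  have : (2 * (Real.pi:ℂ) * Complex.I * w) = (((2 * Real.pi : ℝ)):ℂ) * (w * Complex.I) := by
    push_cast; ring
  rw [this]
  simp [Complex.mul_im, Complex.mul_re]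

lemma norm_e_lt_one {w : ℂ} (h : 0 < w.im) : ‖e w‖ < 1 := by
  rw [norm_e]
  apply Real.exp_lt_one_iff.mpr
  have := Real.pi_pos
  nlinarith

lemma summable_exp_nat {c : ℝ} (hc : 0 < c) : Summable (fun n : ℕ => Real.exp (-c * n)) := by
  have : (fun n : ℕ => Real.exp (-c * n)) = fun n : ℕ => (Real.exp (-c)) ^ n := by
    funext n; rw [← Real.exp_nat_mul]; ring_nf
  rw [this]
  exact summable_geometric_of_lt_one (Real.exp_nonneg _)
    (Real.exp_lt_one_iff.mpr (by linarith))

lemma summable_exp_quad_nat {a : ℝ} (ha : 0 < a) (b : ℝ) :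
    Summable (fun n : ℕ => Real.exp (-a * n ^ 2 + b * n)) := by
  have key : ∀ n : ℕ, Real.exp (-a * n ^ 2 + b * n) ≤
      Real.exp ((b + 1) ^ 2 / (4 * a)) * Real.exp (-1 * n) := by
    intro n
    rw [← Real.exp_add]
    apply Real.exp_le_exp.mpr
    have h := sq_nonneg (2 * a * (n:ℝ) - (b + 1))
    have h4 : 0 < 4 * a := by linarith
    rw [div_add' _ _ _ (ne_of_gt h4), le_div_iff₀ h4]
    nlinarith [h]
  apply Summable.of_nonneg_of_le (fun n => Real.exp_nonneg _) key
  exact (summable_exp_nat one_pos).mul_left _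

lemma summable_exp_quad {a : ℝ} (ha : 0 < a) (b : ℝ) :
    Summable (fun n : ℤ => Real.exp (-a * n ^ 2 + b * n)) := by
  apply Summable.of_nat_of_neg
  · simpa using summable_exp_quad_nat ha b
  · have := summable_exp_quad_nat ha (-b)
    simpa using this

lemma summable_exp_abs {d : ℝ} (hd : 0 < d) :
    Summable (fun n : ℤ => Real.exp (-d * |(n:ℝ)|)) := by
  apply Summable.of_nat_of_neg
  · apply Summable.congr (summable_exp_nat hd)
    intro n; simp [abs_of_nonneg]
  · apply Summable.congr (summable_exp_nat hd)
    intro n; simp [abs_of_nonpos]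

/-- expansion below: `n < al τ w` -/
lemma geo_lt (τ w : ℂ) (n : ℤ) (h : (n:ℝ) * τ.im < w.im) :
    (e ((n:ℂ) * τ) - e w)⁻¹ = ∑' k : ℕ, e (-((k:ℂ)+1) * ((n:ℂ)*τ) + (k:ℂ) * w) := by
  have him : 0 < (w - n*τ).im := by
    simp [Complex.sub_im, Complex.mul_im]
    linarith
  have hgeo := tsum_geometric_of_norm_lt_one (ξ := e (w - (n:ℂ)*τ)) (norm_e_lt_one him)
  have hterm : ∀ k : ℕ, e (-((k:ℂ)+1) * ((n:ℂ)*τ) + (k:ℂ) * w)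
      = e (-((n:ℂ)*τ)) * e (w - (n:ℂ)*τ) ^ k := by
    intro k
    rw [← e_nat_mul, ← e_add]
    congr 1
    ring
  rw [tsum_congr hterm, tsum_mul_left, hgeo]
  have key : e ((n:ℂ)*τ) - e w = e ((n:ℂ)*τ) * (1 - e (w - (n:ℂ)*τ)) := by
    rw [mul_sub, mul_one, ← e_add]
    congr 2
    ring
  rw [key, mul_inv, e_neg]

/-- expansion above: `al τ w < n` -/
lemma geo_gt (τ w : ℂ) (n : ℤ) (h : w.im < (n:ℝ) * τ.im) :
    (e ((n:ℂ) * τ) - e w)⁻¹ = -∑' k : ℕ, e ((k:ℂ) * ((n:ℂ)*τ) - ((k:ℂ)+1) * w) := by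
  have him : 0 < ((n:ℂ)*τ - w).im := by
    simp [Complex.sub_im, Complex.mul_im]
    linarith
  have hgeo := tsum_geometric_of_norm_lt_one (ξ := e ((n:ℂ)*τ - w)) (norm_e_lt_one him)
  have hterm : ∀ k : ℕ, e ((k:ℂ) * ((n:ℂ)*τ) - ((k:ℂ)+1) * w)
      = e (-w) * e ((n:ℂ)*τ - w) ^ k := by
    intro k
    rw [← e_nat_mul, ← e_add]
    congr 1
    ring
  rw [tsum_congr hterm, tsum_mul_left, hgeo]
  have key : e ((n:ℂ)*τ) - e w = (-e w) * (1 - e ((n:ℂ)*τ - w)) := by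
    rw [neg_mul, mul_sub, mul_one, ← e_add]
    ring_nf
  rw [key, mul_inv, e_neg, inv_neg]
  ring

/-! ### theta and kappa terms -/

noncomputable def tt (τ u : ℂ) (m : ℤ) : ℂ := e (τ * (m:ℂ) ^ 2 / 2 + (m:ℂ) * u)

lemma theta_eq (u τ : ℂ) : theta u τ = ∑' m : ℤ, tt τ u m := rfl

lemma norm_tt (τ u : ℂ) (m : ℤ) :
    ‖tt τ u m‖ = Real.exp (-(Real.pi * τ.im) * m ^ 2 + (-(2 * Real.pi) * u.im) * m) := by
  rw [tt, norm_e]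
  congr 1
  simp [Complex.add_im, Complex.mul_im, Complex.div_im, sq]
  ring

lemma summable_norm_tt (τ u : ℂ) (hτ : 0 < τ.im) :
    Summable (fun m : ℤ => ‖tt τ u m‖) := by
  apply Summable.congr (summable_exp_quad (by positivity : (0:ℝ) < Real.pi * τ.im)
    (-(2 * Real.pi) * u.im))
  intro m
  rw [norm_tt]

noncomputable def kterm (τ w s : ℂ) (n : ℤ) : ℂ :=
  e (τ * (n:ℂ) ^ 2 / 2 + (n:ℂ) * s) / (e ((n:ℂ) * τ) - e w)

lemma kappa_eq (w s τ : ℂ) : kappa w s τ = ∑' n : ℤ, kterm τ w s n := rfl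

lemma exp_neg_lt {p q : ℝ} (h : p < q) :
    Real.exp (-(2*Real.pi)*q) < Real.exp (-(2*Real.pi)*p) := by
  apply Real.exp_lt_exp.mpr
  have := Real.pi_pos
  nlinarith

lemma exp_neg_le {p q : ℝ} (h : p ≤ q) :
    Real.exp (-(2*Real.pi)*q) ≤ Real.exp (-(2*Real.pi)*p) := by
  apply Real.exp_le_exp.mpr
  have := Real.pi_pos
  nlinarith

lemma al_mul_im (τ w : ℂ) (hτ : 0 < τ.im) : w.im = al τ w * τ.im := by
  rw [al]; field_simp

/-- uniform lower bound for the denominator -/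
lemma denom_lb (τ w : ℂ) (hτ : 0 < τ.im) (N : ℤ) (hw1 : (N:ℝ) - 1 < al τ w)
    (hw2 : al τ w < N) :
    ∃ δ : ℝ, 0 < δ ∧ ∀ n : ℤ, δ ≤ ‖e ((n:ℂ) * τ) - e w‖ := by
  have hpi := Real.pi_pos
  have hwim : w.im = al τ w * τ.im := al_mul_im τ w hτ
  refine ⟨min (Real.exp (-(2*Real.pi) * (((N:ℝ) - 1) * τ.im)) - Real.exp (-(2*Real.pi) * w.im))
    (Real.exp (-(2*Real.pi) * w.im) - Real.exp (-(2*Real.pi) * ((N:ℝ) * τ.im))), ?_, ?_⟩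
  · apply lt_min
    · rw [sub_pos]
      exact exp_neg_lt (by nlinarith)
    · rw [sub_pos]
      exact exp_neg_lt (by nlinarith)
  · intro n
    have hnτ : ‖e ((n:ℂ) * τ)‖ = Real.exp (-(2*Real.pi) * ((n:ℝ) * τ.im)) := by
      rw [norm_e]; congr 2; simp [Complex.mul_im]
    rcases le_or_gt (n:ℝ) ((N:ℝ) - 1) with hn | hn
    · refine le_trans (min_le_left _ _) ?_
      have h1 : Real.exp (-(2*Real.pi) * (((N:ℝ)-1) * τ.im)) ≤ ‖e ((n:ℂ) * τ)‖ := by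
        rw [hnτ]
        exact exp_neg_le (by nlinarith)
      have h2 := norm_sub_norm_le (e ((n:ℂ) * τ)) (e w)
      rw [norm_e (w := w)] at *
      linarith
    · refine le_trans (min_le_right _ _) ?_
      have hn0 : (N:ℝ) - 1 < (n:ℝ) := hn
      have hn1 : N - 1 < n := by exact_mod_cast hn0
      have hn' : (N:ℝ) ≤ (n:ℝ) := by exact_mod_cast (by omega : N ≤ n)
      have h1 : ‖e ((n:ℂ) * τ)‖ ≤ Real.exp (-(2*Real.pi) * ((N:ℝ) * τ.im)) := by
        rw [hnτ]
        exact exp_neg_le (by nlinarith)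
      have h2 := norm_sub_norm_le (e w) (e ((n:ℂ) * τ))
      rw [norm_sub_rev] at h2
      rw [norm_e (w := w)] at *
      linarith

lemma summable_norm_kterm (τ w s : ℂ) (hτ : 0 < τ.im) (N : ℤ) (hw1 : (N:ℝ) - 1 < al τ w)
    (hw2 : al τ w < N) :
    Summable (fun n : ℤ => ‖kterm τ w s n‖) := by
  obtain ⟨δ, hδ, hlb⟩ := denom_lb τ w hτ N hw1 hw2
  refine Summable.of_nonneg_of_le (f := fun n : ℤ => δ⁻¹ * ‖tt τ s n‖)
    (fun n => norm_nonneg _) ?_ ((summable_norm_tt τ s hτ).mul_left _)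
  intro n
  rw [kterm, norm_div, div_eq_mul_inv, mul_comm]
  exact mul_le_mul_of_nonneg_right (inv_anti₀ hδ (hlb n)) (norm_nonneg _)

/-! ### the triple-sum term -/

noncomputable def Gg (τ w u s : ℂ) (N : ℤ) (p : (ℤ × ℤ) × ℕ) : ℂ :=
  if p.1.2 ≤ N - 1 then
    e (τ * (p.1.1:ℂ)^2/2 + (p.1.1:ℂ)*u + τ * (p.1.2:ℂ)^2/2 + (p.1.2:ℂ)*s
       - ((p.2:ℂ)+1) * ((p.1.2:ℂ)*τ) + ((p.2:ℂ)+1)*w)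
  else
    -e (τ * (p.1.1:ℂ)^2/2 + (p.1.1:ℂ)*u + τ * (p.1.2:ℂ)^2/2 + (p.1.2:ℂ)*s
       + (p.2:ℂ) * ((p.1.2:ℂ)*τ) - (p.2:ℂ)*w)

noncomputable def fb (τ u : ℂ) (m : ℤ) : ℝ :=
  Real.exp (-(Real.pi * τ.im) * m^2 + (-(2*Real.pi) * u.im) * m)

noncomputable def gb (τ s : ℂ) (n : ℤ) : ℝ :=
  Real.exp (-(Real.pi * τ.im) * n^2 + (2*Real.pi*τ.im - 2*Real.pi * s.im) * n)
  + Real.exp (-(Real.pi * τ.im) * n^2 + (-(2*Real.pi) * s.im) * n)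

noncomputable def hb (τ w : ℂ) (N : ℤ) (k : ℕ) : ℝ :=
  max (Real.exp (-(2*Real.pi) * w.im)) 1 *
    Real.exp (-(2*Real.pi*τ.im * min (al τ w - ((N:ℝ) - 1)) ((N:ℝ) - al τ w)) * k)

lemma norm_Gg_le (τ w u s : ℂ) (hτ : 0 < τ.im) (N : ℤ) (hw1 : (N:ℝ) - 1 < al τ w)
    (hw2 : al τ w < N) (p : (ℤ × ℤ) × ℕ) :
    ‖Gg τ w u s N p‖ ≤ fb τ u p.1.1 * gb τ s p.1.2 * hb τ w N p.2 := by
  obtain ⟨⟨m, n⟩, k⟩ := p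
  have hpi := Real.pi_pos
  have hwim : w.im = al τ w * τ.im := al_mul_im τ w hτ
  set c : ℝ := min (al τ w - ((N:ℝ) - 1)) ((N:ℝ) - al τ w) with hc
  have hc1 : c ≤ al τ w - ((N:ℝ) - 1) := min_le_left _ _
  have hc2 : c ≤ (N:ℝ) - al τ w := min_le_right _ _
  rw [Gg]
  split_ifs with hbr
  · have hn : (n:ℝ) ≤ (N:ℝ) - 1 := by exact_mod_cast hbr
    have hk1 : (k:ℝ) * (c * τ.im) ≤ (k:ℝ) * (w.im - n * τ.im) := by
      apply mul_le_mul_of_nonneg_left _ (Nat.cast_nonneg k)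
      nlinarith
    calc ‖e (τ * (m:ℂ)^2/2 + (m:ℂ)*u + τ * (n:ℂ)^2/2 + (n:ℂ)*s
           - ((k:ℂ)+1) * ((n:ℂ)*τ) + ((k:ℂ)+1)*w)‖
        ≤ Real.exp (-(Real.pi * τ.im) * m^2 + (-(2*Real.pi) * u.im) * m)
          * Real.exp (-(Real.pi * τ.im) * n^2 + (2*Real.pi*τ.im - 2*Real.pi * s.im) * n)
          * (Real.exp (-(2*Real.pi) * w.im) * Real.exp (-(2*Real.pi*τ.im * c) * k)) := by
          rw [norm_e, ← Real.exp_add, ← Real.exp_add, ← Real.exp_add]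
          apply Real.exp_le_exp.mpr
          have him : (τ * (m:ℂ)^2/2 + (m:ℂ)*u + τ * (n:ℂ)^2/2 + (n:ℂ)*s
              - ((k:ℂ)+1) * ((n:ℂ)*τ) + ((k:ℂ)+1)*w).im
              = τ.im * m^2/2 + m * u.im + τ.im * n^2/2 + n * s.im
                - ((k:ℝ)+1) * (n * τ.im) + ((k:ℝ)+1) * w.im := by
            simp [Complex.add_im, Complex.sub_im, Complex.mul_im, Complex.div_im, sq]
            try ring
          rw [him]
          nlinarith [hk1]
      _ ≤ fb τ u m * gb τ s n * hb τ w N k := by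
          apply mul_le_mul
          · apply mul_le_mul le_rfl (le_add_of_nonneg_right (Real.exp_nonneg _))
              (Real.exp_nonneg _) (Real.exp_nonneg _)
          · exact mul_le_mul (le_max_left _ _) le_rfl (Real.exp_nonneg _)
              (le_trans zero_le_one (le_max_right _ _))
          · exact mul_nonneg (Real.exp_nonneg _) (Real.exp_nonneg _)
          · exact mul_nonneg (Real.exp_nonneg _)
              (add_nonneg (Real.exp_nonneg _) (Real.exp_nonneg _))
  · replace hbr : ¬ n ≤ N - 1 := hbr
    have hn : (N:ℝ) ≤ (n:ℝ) := by exact_mod_cast (by omega : N ≤ n)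
    have hk1 : (k:ℝ) * (c * τ.im) ≤ (k:ℝ) * (n * τ.im - w.im) := by
      apply mul_le_mul_of_nonneg_left _ (Nat.cast_nonneg k)
      nlinarith
    rw [norm_neg]
    calc ‖e (τ * (m:ℂ)^2/2 + (m:ℂ)*u + τ * (n:ℂ)^2/2 + (n:ℂ)*s
           + (k:ℂ) * ((n:ℂ)*τ) - (k:ℂ)*w)‖
        ≤ Real.exp (-(Real.pi * τ.im) * m^2 + (-(2*Real.pi) * u.im) * m)
          * Real.exp (-(Real.pi * τ.im) * n^2 + (-(2*Real.pi) * s.im) * n)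
          * (1 * Real.exp (-(2*Real.pi*τ.im * c) * k)) := by
          rw [norm_e, ← Real.exp_add, one_mul, ← Real.exp_add]
          apply Real.exp_le_exp.mpr
          have him : (τ * (m:ℂ)^2/2 + (m:ℂ)*u + τ * (n:ℂ)^2/2 + (n:ℂ)*s
              + (k:ℂ) * ((n:ℂ)*τ) - (k:ℂ)*w).im
              = τ.im * m^2/2 + m * u.im + τ.im * n^2/2 + n * s.im
                + (k:ℝ) * (n * τ.im) - (k:ℝ) * w.im := by
            simp [Complex.add_im, Complex.sub_im, Complex.mul_im, Complex.div_im, sq]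
            try ring
          rw [him]
          nlinarith [hk1]
      _ ≤ fb τ u m * gb τ s n * hb τ w N k := by
          apply mul_le_mul
          · apply mul_le_mul le_rfl (le_add_of_nonneg_left (Real.exp_nonneg _))
              (Real.exp_nonneg _) (Real.exp_nonneg _)
          · exact mul_le_mul (le_max_right _ _) le_rfl (Real.exp_nonneg _)
              (le_trans zero_le_one (le_max_right _ _))
          · exact mul_nonneg zero_le_one (Real.exp_nonneg _)
          · exact mul_nonneg (Real.exp_nonneg _)
              (add_nonneg (Real.exp_nonneg _) (Real.exp_nonneg _))

lemma summable_majorant (τ w u s : ℂ) (hτ : 0 < τ.im) (N : ℤ) (hw1 : (N:ℝ) - 1 < al τ w)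
    (hw2 : al τ w < N) :
    Summable (fun p : (ℤ × ℤ) × ℕ => fb τ u p.1.1 * gb τ s p.1.2 * hb τ w N p.2) := by
  have hpi := Real.pi_pos
  have hc : 0 < min (al τ w - ((N:ℝ) - 1)) ((N:ℝ) - al τ w) := lt_min (by linarith) (by linarith)
  have hf : Summable (fb τ u) := summable_exp_quad (by positivity) _
  have hg : Summable (gb τ s) :=
    (summable_exp_quad (by positivity) _).add (summable_exp_quad (by positivity) _)
  have hh : Summable (hb τ w N) :=
    (summable_exp_nat (by positivity)).mul_left _
  have h12 : Summable (fun q : ℤ × ℤ => fb τ u q.1 * gb τ s q.2) :=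
    hf.mul_of_nonneg hg (fun m => Real.exp_nonneg _)
      (fun n => add_nonneg (Real.exp_nonneg _) (Real.exp_nonneg _))
  exact h12.mul_of_nonneg hh
    (fun q => mul_nonneg (Real.exp_nonneg _)
      (add_nonneg (Real.exp_nonneg _) (Real.exp_nonneg _)))
    (fun k => mul_nonneg (le_trans zero_le_one (le_max_right _ _)) (Real.exp_nonneg _))

lemma summable_norm_Gg (τ w u s : ℂ) (hτ : 0 < τ.im) (N : ℤ) (hw1 : (N:ℝ) - 1 < al τ w)
    (hw2 : al τ w < N) :
    Summable (fun p : (ℤ × ℤ) × ℕ => ‖Gg τ w u s N p‖) :=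
  Summable.of_nonneg_of_le (fun p => norm_nonneg _) (norm_Gg_le τ w u s hτ N hw1 hw2)
    (summable_majorant τ w u s hτ N hw1 hw2)

lemma summable_Gg (τ w u s : ℂ) (hτ : 0 < τ.im) (N : ℤ) (hw1 : (N:ℝ) - 1 < al τ w)
    (hw2 : al τ w < N) :
    Summable (Gg τ w u s N) :=
  (summable_norm_Gg τ w u s hτ N hw1 hw2).of_norm

/-! ### expansion of `e w * theta u * kappa w s` as a triple sum -/

lemma expand (τ w u s : ℂ) (hτ : 0 < τ.im) (N : ℤ) (hw1 : (N:ℝ) - 1 < al τ w)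
    (hw2 : al τ w < N) :
    e w * theta u τ * kappa w s τ = ∑' p : (ℤ × ℤ) × ℕ, Gg τ w u s N p := by
  have hwim : w.im = al τ w * τ.im := al_mul_im τ w hτ
  rw [theta_eq, kappa_eq, mul_assoc,
    tsum_mul_tsum_of_summable_norm (summable_norm_tt τ u hτ)
      (summable_norm_kterm τ w s hτ N hw1 hw2), ← tsum_mul_left,
    Summable.tsum_prod (summable_Gg τ w u s hτ N hw1 hw2)]
  apply tsum_congr
  rintro ⟨m, n⟩
  rw [kterm, div_eq_mul_inv]
  rcases le_or_gt n (N - 1) with hn | hn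
  · have hlt : (n:ℝ) * τ.im < w.im := by
      have : (n:ℝ) ≤ (N:ℝ) - 1 := by exact_mod_cast hn
      nlinarith
    rw [geo_lt τ w n hlt, ← tsum_mul_left, ← tsum_mul_left, ← tsum_mul_left]
    apply tsum_congr
    intro k
    rw [Gg]
    rw [if_pos (show ((m, n), k).1.2 ≤ N - 1 from hn)]
    rw [tt, ← e_add, ← e_add, ← e_add]
    congr 1
    push_cast
    ring
  · have hgt : w.im < (n:ℝ) * τ.im := by
      have : (N:ℝ) ≤ (n:ℝ) := by exact_mod_cast (by omega : N ≤ n)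
      nlinarith
    rw [geo_gt τ w n hgt, mul_neg, mul_neg, mul_neg, ← tsum_mul_left, ← tsum_mul_left,
      ← tsum_mul_left, ← tsum_neg]
    apply tsum_congr
    intro k
    rw [Gg]
    rw [if_neg (show ¬ ((m, n), k).1.2 ≤ N - 1 by simp only; omega)]
    rw [neg_inj]
    rw [tt, ← e_add, ← e_add, ← e_add]
    congr 1
    push_cast
    ring

/-! ### reindexing to `ℤ × ℤ × ℤ` -/

noncomputable def Tq (τ x y z : ℂ) (q : ℤ × ℤ × ℤ) : ℂ :=
  e (τ * (q.1:ℂ)^2/2 + (q.1:ℂ)*z + τ * (q.2.1:ℂ) * (q.2.2:ℂ) + (q.2.2:ℂ)*x + (q.2.1:ℂ)*y)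

noncomputable def FA (τ x y z : ℂ) (q : ℤ × ℤ × ℤ) : ℂ :=
  if 0 ≤ q.2.2 ∧ q.1 + q.2.2 + 1 ≤ q.2.1 then Tq τ x y z q
  else if q.2.2 ≤ -1 ∧ q.2.1 ≤ q.1 + q.2.2 then -Tq τ x y z q
  else 0

noncomputable def FB (τ x y z : ℂ) (q : ℤ × ℤ × ℤ) : ℂ :=
  if q.2.1 ≤ -1 ∧ q.2.2 ≤ q.2.1 - q.1 - 1 then Tq τ x y z q
  else if 0 ≤ q.2.1 ∧ q.2.1 - q.1 ≤ q.2.2 then -Tq τ x y z q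
  else 0

def phiA : (ℤ × ℤ) × ℕ → ℤ × ℤ × ℤ :=
  fun p => (p.1.1 + p.1.2, if p.1.2 ≤ 0 then p.1.1 + p.2 + 1 else p.1.1 - p.2, -p.1.2)

def phiB : (ℤ × ℤ) × ℕ → ℤ × ℤ × ℤ :=
  fun p => (p.1.2 - p.1.1, p.1.2, if p.1.2 ≤ -1 then p.1.1 - p.2 - 1 else p.1.1 + p.2)

lemma phiA_inj : Function.Injective phiA := by
  rintro ⟨⟨m, n⟩, k⟩ ⟨⟨m', n'⟩, k'⟩ h
  simp only [phiA, Prod.mk.injEq] at h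
  obtain ⟨h1, h2, h3⟩ := h
  have hn : n = n' := by omega
  subst hn
  split_ifs at h2
  all_goals (simp only [Prod.mk.injEq]; refine ⟨⟨by omega, trivial⟩, by omega⟩)

lemma phiB_inj : Function.Injective phiB := by
  rintro ⟨⟨m, n⟩, k⟩ ⟨⟨m', n'⟩, k'⟩ h
  simp only [phiB, Prod.mk.injEq] at h
  obtain ⟨h1, h2, h3⟩ := h
  subst h2
  split_ifs at h3
  all_goals (simp only [Prod.mk.injEq]; refine ⟨⟨by omega, trivial⟩, by omega⟩)

lemma suppA (τ x y z : ℂ) : Function.support (FA τ x y z) ⊆ Set.range phiA := by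
  rintro ⟨l, mm, nn⟩ hq
  rw [Function.mem_support, FA] at hq
  split_ifs at hq with h1 h2
  · dsimp only at h1
    refine ⟨((l + nn, -nn), (mm - l - nn - 1).toNat), ?_⟩
    simp only [phiA]
    rw [if_pos (show -nn ≤ 0 by omega)]
    simp only [Prod.mk.injEq]
    refine ⟨by omega, by omega, by omega⟩
  · dsimp only at h2
    refine ⟨((l + nn, -nn), (l + nn - mm).toNat), ?_⟩
    simp only [phiA]
    rw [if_neg (show ¬ -nn ≤ 0 by omega)]
    simp only [Prod.mk.injEq]
    refine ⟨by omega, by omega, by omega⟩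
  · exact absurd rfl hq

lemma suppB (τ x y z : ℂ) : Function.support (FB τ x y z) ⊆ Set.range phiB := by
  rintro ⟨l, mm, nn⟩ hq
  rw [Function.mem_support, FB] at hq
  split_ifs at hq with h1 h2
  · dsimp only at h1
    refine ⟨((mm - l, mm), (mm - l - 1 - nn).toNat), ?_⟩
    simp only [phiB]
    rw [if_pos (show mm ≤ -1 by omega)]
    simp only [Prod.mk.injEq]
    refine ⟨by omega, trivial, by omega⟩
  · dsimp only at h2
    refine ⟨((mm - l, mm), (nn - (mm - l)).toNat), ?_⟩
    simp only [phiB]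
    rw [if_neg (show ¬ mm ≤ -1 by omega)]
    simp only [Prod.mk.injEq]
    refine ⟨by omega, trivial, by omega⟩
  · exact absurd rfl hq

lemma compA (τ x y z : ℂ) (p : (ℤ × ℤ) × ℕ) :
    FA τ x y z (phiA p) = Gg τ y (y + z) (z - x) 1 p := by
  obtain ⟨⟨m, n⟩, k⟩ := p
  by_cases hn : n ≤ 0
  · have hp : phiA ((m, n), k) = (m + n, m + k + 1, -n) := by
      simp only [phiA]; rw [if_pos hn]
    rw [hp, FA, if_pos (show 0 ≤ (m + n, m + k + 1, -n).2.2 ∧ _ from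
      ⟨by dsimp only; omega, by dsimp only; omega⟩), Tq, Gg, if_pos (show ((m, n), k).1.2 ≤ 1 - 1 by
        simp only; omega)]
    congr 1
    push_cast
    ring
  · have hp : phiA ((m, n), k) = (m + n, m - k, -n) := by
      simp only [phiA]; rw [if_neg hn]
    rw [hp, FA, if_neg (show ¬ (0 ≤ (m + n, m - k, -n).2.2 ∧ _) by
        dsimp only; simp only [not_and]; intro h; omega),
      if_pos (show (m + n, m - k, -n).2.2 ≤ -1 ∧ _ from ⟨by dsimp only; omega, by dsimp only; omega⟩),
      Tq, Gg, if_neg (show ¬ ((m, n), k).1.2 ≤ 1 - 1 by simp only; omega)]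
    rw [neg_inj]
    congr 1
    push_cast
    ring

lemma compB (τ x y z : ℂ) (p : (ℤ × ℤ) × ℕ) :
    FB τ x y z (phiB p) = Gg τ (-x) (x - z) (y + z) 0 p := by
  obtain ⟨⟨m, n⟩, k⟩ := p
  by_cases hn : n ≤ -1
  · have hp : phiB ((m, n), k) = (n - m, n, m - k - 1) := by
      simp only [phiB]; rw [if_pos hn]
    rw [hp, FB, if_pos (show (n - m, n, m - k - 1).2.1 ≤ -1 ∧ _ from
      ⟨by dsimp only; omega, by dsimp only; omega⟩), Tq, Gg, if_pos (show ((m, n), k).1.2 ≤ 0 - 1 by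
        simp only; omega)]
    congr 1
    push_cast
    ring
  · have hp : phiB ((m, n), k) = (n - m, n, m + k) := by
      simp only [phiB]; rw [if_neg hn]
    rw [hp, FB, if_neg (show ¬ ((n - m, n, m + k).2.1 ≤ -1 ∧ _) by
        dsimp only; simp only [not_and]; intro h; omega),
      if_pos (show 0 ≤ (n - m, n, m + k).2.1 ∧ _ from ⟨by dsimp only; omega, by dsimp only; omega⟩),
      Tq, Gg, if_neg (show ¬ ((m, n), k).1.2 ≤ 0 - 1 by simp only; omega)]
    rw [neg_inj]
    congr 1
    push_cast
    ring

lemma reindexA (τ x y z : ℂ) (hτ : 0 < τ.im) (hy : 0 < al τ y) (hy' : al τ y < 1) :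
    Summable (FA τ x y z) ∧
      e y * theta (y + z) τ * kappa y (z - x) τ = ∑' q : ℤ × ℤ × ℤ, FA τ x y z q := by
  have hw1 : ((1:ℤ):ℝ) - 1 < al τ y := by push_cast; linarith
  have hw2 : al τ y < ((1:ℤ):ℝ) := by push_cast; linarith
  have hzero : ∀ q ∉ Set.range phiA, FA τ x y z q = 0 := by
    intro q hq
    by_contra h
    exact hq (suppA τ x y z h)
  have hsum : Summable (FA τ x y z) := by
    rw [← phiA_inj.summable_iff hzero]
    exact Summable.congr (summable_Gg τ y (y + z) (z - x) hτ 1 hw1 hw2)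
      (fun p => (compA τ x y z p).symm)
  refine ⟨hsum, ?_⟩
  rw [expand τ y (y + z) (z - x) hτ 1 hw1 hw2,
    ← Function.Injective.tsum_eq phiA_inj (suppA τ x y z)]
  exact tsum_congr (fun p => (compA τ x y z p).symm)

lemma al_neg (τ x : ℂ) : al τ (-x) = -al τ x := by
  simp [al, neg_div]

lemma reindexB (τ x y z : ℂ) (hτ : 0 < τ.im) (hx : 0 < al τ x) (hx' : al τ x < 1) :
    Summable (FB τ x y z) ∧
      e (-x) * theta (x - z) τ * kappa (-x) (y + z) τ = ∑' q : ℤ × ℤ × ℤ, FB τ x y z q := by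
  have hw1 : ((0:ℤ):ℝ) - 1 < al τ (-x) := by rw [al_neg]; push_cast; linarith
  have hw2 : al τ (-x) < ((0:ℤ):ℝ) := by rw [al_neg]; push_cast; linarith
  have hzero : ∀ q ∉ Set.range phiB, FB τ x y z q = 0 := by
    intro q hq
    by_contra h
    exact hq (suppB τ x y z h)
  have hsum : Summable (FB τ x y z) := by
    rw [← phiB_inj.summable_iff hzero]
    exact Summable.congr (summable_Gg τ (-x) (x - z) (y + z) hτ 0 hw1 hw2)
      (fun p => (compB τ x y z p).symm)
  refine ⟨hsum, ?_⟩
  rw [expand τ (-x) (x - z) (y + z) hτ 0 hw1 hw2,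
    ← Function.Injective.tsum_eq phiB_inj (suppB τ x y z)]
  exact tsum_congr (fun p => (compB τ x y z p).symm)

/-! ### the right-hand side -/

lemma quad_bound {ax ay : ℝ} (hx : 0 < ax) (hx' : ax < 1) (hy : 0 < ay) (hy' : ay < 1)
    (m n : ℤ) (h : 0 < (ax + m) * (ay + n)) :
    min ay ((1 - ay)/2) * |(m:ℝ)| + min ax ((1 - ax)/2) * |(n:ℝ)| - 2
      ≤ (m:ℝ) * n + n * ax + m * ay := by
  rcases le_or_gt 0 m with hm | hm
  · have hm' : (0:ℝ) ≤ m := by exact_mod_cast hm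
    have h2 : 0 < ay + n := by
      by_contra h2
      push_neg at h2
      nlinarith
    have hn : 0 ≤ n := by
      by_contra hn
      push_neg at hn
      have : (n:ℝ) ≤ -1 := by exact_mod_cast (by omega : n ≤ -1)
      linarith
    have hn' : (0:ℝ) ≤ n := by exact_mod_cast hn
    rw [_root_.abs_of_nonneg hm', _root_.abs_of_nonneg hn']
    have f1 : min ay ((1 - ay)/2) * m ≤ ay * m :=
      mul_le_mul_of_nonneg_right (min_le_left _ _) hm'
    have f2 : min ax ((1 - ax)/2) * n ≤ ax * n :=
      mul_le_mul_of_nonneg_right (min_le_left _ _) hn'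
    have f3 : (0:ℝ) ≤ (m:ℝ) * n := mul_nonneg hm' hn'
    linarith
  · have hm1 : (m:ℝ) ≤ -1 := by exact_mod_cast (by omega : m ≤ -1)
    have hA : 0 < -(m:ℝ) - ax := by linarith
    have h2 : ay + n < 0 := by
      by_contra h2
      push_neg at h2
      nlinarith
    have hn1 : (n:ℝ) ≤ -1 := by
      exact_mod_cast (by
        by_contra hn
        push_neg at hn
        have : (0:ℝ) ≤ n := by exact_mod_cast (by omega : 0 ≤ n)
        linarith : n ≤ -1)
    have hB : 0 < -(n:ℝ) - ay := by linarith
    rw [_root_.abs_of_nonpos (by linarith), _root_.abs_of_nonpos (by linarith)]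
    have h1 : (-(m:ℝ) - ax) * (1 - ay) ≤ (-(m:ℝ) - ax) * (-(n:ℝ) - ay) :=
      mul_le_mul_of_nonneg_left (by linarith) (le_of_lt hA)
    have h2' : (1 - ax) * (-(n:ℝ) - ay) ≤ (-(m:ℝ) - ax) * (-(n:ℝ) - ay) :=
      mul_le_mul_of_nonneg_right (by linarith) (le_of_lt hB)
    have hpm : min ay ((1 - ay)/2) * (-(m:ℝ)) ≤ (1 - ay)/2 * (-(m:ℝ)) :=
      mul_le_mul_of_nonneg_right (min_le_right _ _) (by linarith)
    have hpn : min ax ((1 - ax)/2) * (-(n:ℝ)) ≤ (1 - ax)/2 * (-(n:ℝ)) :=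
      mul_le_mul_of_nonneg_right (min_le_right _ _) (by linarith)
    have c1 : (1 - ay) * ax ≤ 1 := by nlinarith
    have c2 : (1 - ax) * ay ≤ 1 := by nlinarith
    have c3 : ax * ay ≤ 1 := by nlinarith
    nlinarith [h1, h2', hpm, hpn]

lemma summable_Kdd (K d1 d2 : ℝ) (h1 : 0 < d1) (h2 : 0 < d2) :
    Summable (fun p : ℤ × ℤ =>
      K * (Real.exp (-d1 * |(p.1:ℝ)|) * Real.exp (-d2 * |(p.2:ℝ)|))) := by
  have hprod : Summable (fun p : ℤ × ℤ =>
      Real.exp (-d1 * |(p.1:ℝ)|) * Real.exp (-d2 * |(p.2:ℝ)|)) :=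
    (summable_exp_abs h1).mul_of_nonneg (summable_exp_abs h2)
      (fun m => Real.exp_nonneg _) (fun n => Real.exp_nonneg _)
  exact hprod.mul_left _

lemma summable_norm_fterm (τ x y : ℂ) (hτ : 0 < τ.im) (hx : 0 < al τ x) (hx' : al τ x < 1)
    (hy : 0 < al τ y) (hy' : al τ y < 1) :
    Summable (fun p : ℤ × ℤ => ‖fterm τ x y p‖) := by
  have hpi := Real.pi_pos
  set ax := al τ x
  set ay := al τ y
  have hxim : x.im = ax * τ.im := al_mul_im τ x hτ
  have hyim : y.im = ay * τ.im := al_mul_im τ y hτ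
  set d1 : ℝ := 2*Real.pi*τ.im * min ay ((1 - ay)/2) with hd1
  set d2 : ℝ := 2*Real.pi*τ.im * min ax ((1 - ax)/2) with hd2
  have hd1p : 0 < d1 := by
    apply mul_pos (by positivity)
    apply lt_min <;> linarith
  have hd2p : 0 < d2 := by
    apply mul_pos (by positivity)
    apply lt_min <;> linarith
  refine Summable.of_nonneg_of_le (f := fun p : ℤ × ℤ =>
      Real.exp (4*Real.pi*τ.im) * (Real.exp (-d1 * |(p.1:ℝ)|) * Real.exp (-d2 * |(p.2:ℝ)|)))
    (fun p => norm_nonneg _) ?_ ?_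
  · rintro ⟨m, n⟩
    rw [fterm]
    dsimp only
    split_ifs with h
    · have hsg : ‖sgn (ax + (m:ℝ))‖ = 1 := by
        rw [sgn]
        split_ifs <;> simp
      rw [norm_mul, hsg, one_mul, norm_e, ← Real.exp_add, ← Real.exp_add]
      apply Real.exp_le_exp.mpr
      have him : (τ * (m:ℂ) * (n:ℂ) + (n:ℂ) * x + (m:ℂ) * y).im
          = τ.im * m * n + n * x.im + m * y.im := by
        simp [Complex.add_im, Complex.mul_im]
        try ring
      rw [him, hxim, hyim, hd1, hd2]
      have hq := quad_bound hx hx' hy hy' m n h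
      have h5 := mul_le_mul_of_nonneg_left hq (by positivity : (0:ℝ) ≤ 2*Real.pi*τ.im)
      nlinarith [h5]
    · rw [norm_zero]
      exact mul_nonneg (Real.exp_nonneg _)
        (mul_nonneg (Real.exp_nonneg _) (Real.exp_nonneg _))
  · exact summable_Kdd _ _ _ hd1p hd2p

lemma fterm_if (τ x y : ℂ) (hτ : 0 < τ.im) (hx : 0 < al τ x) (hx' : al τ x < 1)
    (hy : 0 < al τ y) (hy' : al τ y < 1) (p : ℤ × ℤ) :
    fterm τ x y p =
      if 0 ≤ p.1 ∧ 0 ≤ p.2 then e (τ * p.1 * p.2 + p.2 * x + p.1 * y)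
      else if p.1 ≤ -1 ∧ p.2 ≤ -1 then -e (τ * p.1 * p.2 + p.2 * x + p.1 * y)
      else 0 := by
  obtain ⟨m, n⟩ := p
  rw [fterm, sgn]
  rcases le_or_gt 0 m with hm | hm <;> rcases le_or_gt 0 n with hn | hn
  · have h1 : 0 < al τ x + (m:ℝ) := by
      have : (0:ℝ) ≤ m := by exact_mod_cast hm
      linarith
    have h2 : 0 < al τ y + (n:ℝ) := by
      have : (0:ℝ) ≤ n := by exact_mod_cast hn
      linarith
    rw [if_pos (mul_pos h1 h2), if_pos h1, one_mul,
      if_pos (show 0 ≤ (m, n).1 ∧ 0 ≤ (m, n).2 from ⟨hm, hn⟩)]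
  · have h1 : 0 < al τ x + (m:ℝ) := by
      have : (0:ℝ) ≤ m := by exact_mod_cast hm
      linarith
    have h2 : al τ y + (n:ℝ) < 0 := by
      have : (n:ℝ) ≤ -1 := by exact_mod_cast (by omega : n ≤ -1)
      linarith
    rw [if_neg (by nlinarith), if_neg (by dsimp only; omega), if_neg (by dsimp only; omega)]
  · have h1 : al τ x + (m:ℝ) < 0 := by
      have : (m:ℝ) ≤ -1 := by exact_mod_cast (by omega : m ≤ -1)
      linarith
    have h2 : 0 < al τ y + (n:ℝ) := by
      have : (0:ℝ) ≤ n := by exact_mod_cast hn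
      linarith
    rw [if_neg (by nlinarith), if_neg (by dsimp only; omega), if_neg (by dsimp only; omega)]
  · have h1 : al τ x + (m:ℝ) < 0 := by
      have : (m:ℝ) ≤ -1 := by exact_mod_cast (by omega : m ≤ -1)
      linarith
    have h2 : al τ y + (n:ℝ) < 0 := by
      have : (n:ℝ) ≤ -1 := by exact_mod_cast (by omega : n ≤ -1)
      linarith
    rw [if_pos (mul_pos_of_neg_of_neg h1 h2), if_neg (not_lt.mpr (le_of_lt h1)),
      if_neg (by dsimp only; omega), if_pos (show (m, n).1 ≤ -1 ∧ (m, n).2 ≤ -1 from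
        ⟨by omega, by omega⟩), neg_one_mul]

lemma rhs_eq (τ x y z : ℂ) (hτ : 0 < τ.im) (hx : 0 < al τ x) (hx' : al τ x < 1)
    (hy : 0 < al τ y) (hy' : al τ y < 1) :
    theta z τ * fKr x y τ = ∑' q : ℤ × ℤ × ℤ, (FA τ x y z q - FB τ x y z q) := by
  rw [theta_eq, fKr,
    tsum_mul_tsum_of_summable_norm (summable_norm_tt τ z hτ)
      (summable_norm_fterm τ x y hτ hx hx' hy hy')]
  apply tsum_congr
  rintro ⟨l, m, n⟩
  rw [show ((l, (m, n)) : ℤ × ℤ × ℤ).1 = l from rfl,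
    show ((l, (m, n)) : ℤ × ℤ × ℤ).2 = (m, n) from rfl,
    fterm_if τ x y hτ hx hx' hy hy' (m, n), FA, FB, Tq, tt]
  dsimp only
  split_ifs
  all_goals
    first
      | (exfalso; omega)
      | (rw [sub_zero, ← e_add]; congr 1; push_cast; ring)
      | (rw [zero_sub, neg_neg, ← e_add]; congr 1; push_cast; ring)
      | (rw [mul_neg, sub_zero, neg_inj, ← e_add]; congr 1; push_cast; ring)
      | (rw [mul_neg, zero_sub, neg_inj, ← e_add]; congr 1; push_cast; ring)
      | (rw [mul_zero, sub_self])

theorem stmt15 (τ : ℂ) (hτ : 0 < τ.im) (x y z : ℂ)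
    (hx : 0 < al τ x) (hx' : al τ x < 1) (hy : 0 < al τ y) (hy' : al τ y < 1) :
    e y * theta (y + z) τ * kappa y (z - x) τ -
      e (-x) * theta (x - z) τ * kappa (-x) (y + z) τ =
    theta z τ * fKr x y τ := by
  obtain ⟨hsA, hA⟩ := reindexA τ x y z hτ hy hy'
  obtain ⟨hsB, hB⟩ := reindexB τ x y z hτ hx hx'
  rw [hA, hB, ← Summable.tsum_sub hsA hsB]
  exact (rhs_eq τ x y z hτ hx hx' hy hy').symm
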